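/- arXiv:1910.07335 — 2 statements merged into one kernel-verified Lean document; each statement's English description precedes it below -/
import Mathlib

section
/- Let α and β be elements of a commutative ring with αβ = ℓ, and define t_n = α^n + β^n. Then for all n ≥ 0, t_{2n+1}² - 4ℓ^{2n+1} = (t₁² - 4ℓ) · ((1-2n)ℓ^n + Σ_{j=1}^{n} ℓ^{n-j} t_j²)². -/
/-!
Put `S n = (1 - 2n) ℓ^n + ∑_{j=1}^{n} ℓ^(n-j) t_j²`. Peeling off the top term gives
`S (n+1) = ℓ S n + t_{n+1}² - 2ℓ^(n+1) = ℓ S n + α^(2n+2) + β^(2n+2)`, from which induction shows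
`(α - β) S n = α^(2n+1) - β^(2n+1)`. Squaring, and using `(a + b)² - 4ab = (a - b)²` for
`a, b = α^(2n+1), β^(2n+1)` and for `a, b = α, β`, gives the formula.
-/

open Finset

lemma sum_Icc_one_pow_sub_mul_succ {R : Type*} [CommSemiring R] (x : R) (f : ℕ → R) (n : ℕ) :
    ∑ j ∈ Icc 1 (n + 1), x ^ (n + 1 - j) * f j =
      x * ∑ j ∈ Icc 1 n, x ^ (n - j) * f j + f (n + 1) := by
  rw [sum_Icc_succ_top (by omega), Nat.sub_self, pow_zero, one_mul, mul_sum]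
  congr 1
  refine sum_congr rfl fun j hj => ?_
  rw [Nat.sub_add_comm (mem_Icc.mp hj).2, pow_succ]
  ring

lemma sub_mul_trace_sq_sum_eq_pow_sub_pow {R : Type*} [CommRing R] (α β : R) (n : ℕ) :
    (α - β) * ((1 - 2 * (n : R)) * (α * β) ^ n +
        ∑ j ∈ Icc 1 n, (α * β) ^ (n - j) * (α ^ j + β ^ j) ^ 2) =
      α ^ (2 * n + 1) - β ^ (2 * n + 1) := by
  induction n with
  | zero => simp
  | succ n ih =>
    rw [sum_Icc_one_pow_sub_mul_succ]
    push_cast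
    linear_combination (α * β) * ih

/-- Let `α`, `β` be elements of a commutative ring with `α * β = ℓ`, and `t n = α ^ n + β ^ n`.
Then for all `n ≥ 0`,
`t (2n+1)² - 4 ℓ^(2n+1) = (t 1² - 4 ℓ) * ((1 - 2n) ℓ^n + ∑_{j=1}^{n} ℓ^(n-j) t j²)²`. -/
theorem trace_odd_formula {R : Type*} [CommRing R] (α β ℓ : R) (t : ℕ → R)
    (hℓ : α * β = ℓ) (ht : ∀ n, t n = α ^ n + β ^ n) :
    ∀ n : ℕ, (t (2 * n + 1)) ^ 2 - 4 * ℓ ^ (2 * n + 1) =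
      ((t 1) ^ 2 - 4 * ℓ) *
        ((1 - 2 * (n : R)) * ℓ ^ n + ∑ j ∈ Finset.Icc 1 n, ℓ ^ (n - j) * (t j) ^ 2) ^ 2 := by
  intro n
  subst hℓ
  simp only [ht]
  set S := (1 - 2 * (n : R)) * (α * β) ^ n +
    ∑ j ∈ Icc 1 n, (α * β) ^ (n - j) * (α ^ j + β ^ j) ^ 2
  calc (α ^ (2 * n + 1) + β ^ (2 * n + 1)) ^ 2 - 4 * (α * β) ^ (2 * n + 1)
      _ = (α ^ (2 * n + 1) - β ^ (2 * n + 1)) ^ 2 := by ring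
      _ = ((α - β) * S) ^ 2 := by rw [sub_mul_trace_sq_sum_eq_pow_sub_pow]
      _ = ((α ^ 1 + β ^ 1) ^ 2 - 4 * (α * β)) * S ^ 2 := by ring
end

section
/- Let G = GL₂(𝔽_p) (p odd prime) and H ⊴ G a normal subgroup containing a subgroup isomorphic to {diag(*, 1)} (all matrices [[a,0],[0,1]], a ∈ 𝔽_p^×). Then H = G. -/
/-!
For a diagonal `g = diag(d)` with `dᵢ = -dⱼ` and `t = 1 + (c/2)Eᵢⱼ`, conjugation by `g` inverts
`t`, so the commutator `t g t⁻¹ g⁻¹ = t² = 1 + cEᵢⱼ`; since `diag(-1, 1) ∈ H` and `2 ≠ 0`, the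
normal subgroup `H` contains every transvection. Then `diag(a, d) = diag(ad, 1) · diag(d⁻¹, d)`
lies in `H`, and every invertible matrix is a product of transvections and an invertible diagonal
matrix.
-/

open Matrix
open Matrix.SpecialLinearGroup (toGL)

namespace Matrix

variable {n K : Type*} [Fintype n] [DecidableEq n] [Field K]

theorem diagonal_mul_transvection_neg {d : n → K} {i j : n} (hd : d i = -d j) (c : K) :
    diagonal d * transvection i j (-c) = transvection i j c * diagonal d := by
  ext k l
  rw [diagonal_mul, mul_diagonal]
  by_cases hk : k = i <;> by_cases hl : l = j <;>
    simp [transvection, one_apply, single_apply, hk, hl, hd] <;> grind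

namespace GeneralLinearGroup

theorem toGL_transvection_mem_of_normal {H : Subgroup (GL n K)} (hH : H.Normal)
    (h2 : (2 : K) ≠ 0) {g : GL n K} (hg : g ∈ H) {d : n → K}
    (hgd : (g : Matrix n n K) = diagonal d) {i j : n} (hij : i ≠ j) (hd : d i = -d j) (c : K) :
    toGL (SpecialLinearGroup.transvection hij c) ∈ H := by
  have : NeZero (2 : K) := ⟨h2⟩
  set t := toGL (SpecialLinearGroup.transvection hij (c / 2))
  have hcomm : g * t⁻¹ = t * g := by
    rw [Units.ext_iff, Units.val_mul, Units.val_mul, hgd, ← map_inv,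
      SpecialLinearGroup.transvection_inv]
    exact diagonal_mul_transvection_neg hd _
  have : toGL (SpecialLinearGroup.transvection hij c) = t * g * t⁻¹ * g⁻¹ := by
    rw [mul_assoc t, hcomm, ← mul_assoc, mul_inv_cancel_right, ← map_mul,
      ← SpecialLinearGroup.transvection_add, add_halves]
  rw [this]
  exact H.mul_mem (hH.conj_mem g hg t) (H.inv_mem hg)

theorem eq_top_of_transvection_mem_of_isDiag_mem {H : Subgroup (GL n K)}
    (htrans : ∀ (i j : n) (hij : i ≠ j) (c : K), toGL (SpecialLinearGroup.transvection hij c) ∈ H)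
    (hdiag : ∀ g : GL n K, (g : Matrix n n K).IsDiag → g ∈ H) : H = ⊤ := by
  refine eq_top_iff.2 fun g _ ↦ ?_
  obtain ⟨h, hH, hgh⟩ : ∃ h ∈ H, (h : Matrix n n K) = g := by
    refine diagonal_transvection_induction_of_det_ne_zero (fun M ↦ ∃ h ∈ H, (h : Matrix n n K) = M)
      g g.det_ne_zero (fun D hD ↦ ?_) (fun t ↦ ?_) ?_
    · exact ⟨mkOfDetNeZero _ hD, hdiag _ (isDiag_diagonal D), rfl⟩
    · exact ⟨_, htrans t.i t.j t.hij t.c, rfl⟩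
    · rintro A B - - ⟨a, ha, rfl⟩ ⟨b, hb, rfl⟩
      exact ⟨a * b, H.mul_mem ha hb, rfl⟩
  rwa [← Units.ext hgh]

theorem mem_of_isDiag_of_transvection_mem_fin_two {H : Subgroup (GL (Fin 2) K)}
    (htrans : ∀ (i j : Fin 2) (hij : i ≠ j) (c : K),
      toGL (SpecialLinearGroup.transvection hij c) ∈ H)
    (hdiag : ∀ g : GL (Fin 2) K, (g : Matrix (Fin 2) (Fin 2) K) 0 1 = 0 →
      (g : Matrix (Fin 2) (Fin 2) K) 1 0 = 0 → (g : Matrix (Fin 2) (Fin 2) K) 1 1 = 1 → g ∈ H)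
    {g : GL (Fin 2) K} (hg : (g : Matrix (Fin 2) (Fin 2) K).IsDiag) : g ∈ H := by
  have h01 : (g : Matrix (Fin 2) (Fin 2) K) 0 1 = 0 := hg (by decide)
  have h10 : (g : Matrix (Fin 2) (Fin 2) K) 1 0 = 0 := hg (by decide)
  have hd : (g : Matrix (Fin 2) (Fin 2) K) 1 1 ≠ 0 := by
    have := g.det_ne_zero
    rw [det_fin_two, h01, zero_mul, sub_zero] at this
    exact right_ne_zero_of_mul this
  have hdiag2 (x : K) (hx : x ≠ 0) : toGL (SpecialLinearGroup.diag2 x hx) ∈ H := by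
    rw [diag2_decompose]
    simp only [map_mul]
    repeat refine H.mul_mem ?_ (htrans _ _ _ _)
    exact htrans _ _ _ _
  set s := toGL (SpecialLinearGroup.diag2 _ hd)
  rw [← mul_inv_cancel_right g s]
  refine H.mul_mem (hdiag _ ?_ ?_ ?_) (H.inv_mem (hdiag2 _ hd)) <;>
    simp [s, mul_apply, Fin.sum_univ_two, SpecialLinearGroup.diag2_coe', h01, h10, hd]

end GeneralLinearGroup

end Matrix

open Matrix.GeneralLinearGroup

/-- Let `G = GL₂(𝔽_p)` (`p` an odd prime) and `H ⊴ G` a normal subgroup containing the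
subgroup of all matrices `diag(a, 1)`, `a ∈ 𝔽_p^×`.  Then `H = G`. -/
theorem normal_subgroup_containing_diagonal_is_top (p : ℕ) [Fact p.Prime] (hp : p ≠ 2)
    (H : Subgroup (GL (Fin 2) (ZMod p))) (hH : H.Normal)
    (hdiag : ∀ g : GL (Fin 2) (ZMod p),
      (g : Matrix (Fin 2) (Fin 2) (ZMod p)) 0 1 = 0 →
      (g : Matrix (Fin 2) (Fin 2) (ZMod p)) 1 0 = 0 →
      (g : Matrix (Fin 2) (Fin 2) (ZMod p)) 1 1 = 1 → g ∈ H) :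
    H = ⊤ := by
  have h2 : (2 : ZMod p) ≠ 0 := Ring.two_ne_zero ((ZMod.ringChar_zmod_n p).trans_ne hp)
  have hreflection : mkOfDetNeZero (diagonal ![-1, 1]) (by simp) ∈ H :=
    hdiag _ (by simp) (by simp) (by simp)
  have htrans (i j : Fin 2) (hij : i ≠ j) (c : ZMod p) :
      toGL (SpecialLinearGroup.transvection hij c) ∈ H := by
    refine toGL_transvection_mem_of_normal hH h2 hreflection rfl hij ?_ c
    fin_cases i <;> fin_cases j <;> simp_all
  exact eq_top_of_transvection_mem_of_isDiag_mem htrans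
    fun _ ↦ mem_of_isDiag_of_transvection_mem_fin_two htrans hdiag
end
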